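/- arXiv:1001.2719 — 5 statements merged into one kernel-verified Lean document; each statement's English description precedes it below -/
import Mathlib

section
/- For every real number q with 0 < q < 1 and every real number u with 0 < |u| < min(2π, log(1/q)), one has the convergent identity −2·log( sin(u/2)/(u/2) ) + Σ_{n=1}^∞ [ 4·log(1−qⁿ) − 2·log(1 − 2cos(u)·qⁿ + q^{2n}) ] = Σ_{g=1}^∞ u^{2g} · ((−1)^{g+1} B_{2g} / (g·(2g)!)) · E_{2g}(q), where both infinite series converge absolutely. (This is the logarithmic identity proved in the paper's derivation of Corollary 2, expressing log( Δ(q) / (S(u)²·Δ(e^{iu},q)) ) as an Eisenstein series expansion; note 1 − 2cos(u)qⁿ + q^{2n} = |1 − e^{iu}qⁿ|² > 0.) -/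
/-- The Eisenstein series `E_{2g}(q) = 1 - (4g/B_{2g}) ∑_{k≥1} k^{2g-1} q^k/(1-q^k)`. -/
noncomputable def Eis (g : ℕ) (q : ℝ) : ℝ :=
  1 - (4 * (g : ℝ) / ((bernoulli (2 * g) : ℚ) : ℝ)) *
    ∑' k : ℕ, (((k : ℝ) + 1) ^ (2 * g - 1) * q ^ (k + 1) / (1 - q ^ (k + 1)))

/-!
Both sides are rearrangements of absolutely convergent double series. Euler's product
`sin (π x) / (π x) = ∏ (1 - x² / j²)` and `-log (1 - t) = ∑ tᵐ / m` turn
`-2 log (sin (u/2) / (u/2))` into `∑_g 2 ζ(2g) (u / 2π)^{2g} / g`, and Euler's evaluation of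
`ζ(2g)` identifies this with the constant terms of the `E_{2g}`. Each factor
`4 log (1 - qⁿ) - 2 log |1 - e^{iu} qⁿ|²` expands as `-4 ∑_k (1 - cos ku) q^{nk} / k`;
summing the geometric series in `n` and then expanding `1 - cos ku` in powers of `u` produces
the Lambert series `∑_k k^{2g-1} qᵏ / (1 - qᵏ)`. Both interchanges of summation are justified
by `q e^{|u|} < 1`, which is what `|u| < log (1/q)` provides.
-/

open Real

theorem hasSum_rows_and_cols {α β γ : Type*} [AddCommMonoid α] [TopologicalSpace α]
    [ContinuousAdd α] [T3Space α] {f : β × γ → α} {r : β → α} {s : γ → α}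
    (hf : Summable f) (hrow : ∀ b, HasSum (fun c => f (b, c)) (r b))
    (hcol : ∀ c, HasSum (fun b => f (b, c)) (s c)) :
    HasSum r (∑' p, f p) ∧ HasSum s (∑' p, f p) := by
  refine ⟨hf.hasSum.prod_fiberwise hrow, ?_⟩
  rw [← (Equiv.prodComm γ β).tsum_eq]
  exact ((Equiv.prodComm γ β).summable_iff.mpr hf).hasSum.prod_fiberwise hcol

theorem hasSum_pow_succ_geometric {r : ℝ} (hr : |r| < 1) :
    HasSum (fun n : ℕ => r ^ (n + 1)) (r / (1 - r)) := by
  simpa only [pow_succ', div_eq_mul_inv] using (hasSum_geometric_of_abs_lt_one hr).mul_left r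

theorem hasSum_pow_mul_cos_div {r : ℝ} (u : ℝ) (hr : |r| < 1) :
    HasSum (fun k : ℕ => r ^ (k + 1) * cos ((k + 1) * u) / (k + 1))
      (-(log (1 - 2 * cos u * r + r ^ 2) / 2)) := by
  set z : ℂ := r * Complex.exp (u * Complex.I)
  have hz : ‖z‖ < 1 := by
    rwa [norm_mul, Complex.norm_exp_ofReal_mul_I, mul_one, Complex.norm_real, norm_eq_abs]
  have hnorm : ‖1 - z‖ ^ 2 = 1 - 2 * cos u * r + r ^ 2 := by
    rw [Complex.sq_norm, Complex.normSq_apply]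
    simp only [z, Complex.sub_re, Complex.sub_im, Complex.one_re, Complex.one_im,
      Complex.re_ofReal_mul, Complex.im_ofReal_mul, Complex.exp_ofReal_mul_I_re,
      Complex.exp_ofReal_mul_I_im]
    linear_combination r ^ 2 * sin_sq_add_cos_sq u
  have hre : (-Complex.log (1 - z)).re = -(log (1 - 2 * cos u * r + r ^ 2) / 2) := by
    rw [Complex.neg_re, Complex.log_re, ← hnorm, log_pow]
    push_cast
    ring
  refine hre ▸ (Complex.hasSum_re (Complex.hasSum_taylorSeries_neg_log' hz)).congr_fun
    fun k => ?_
  have hpow : z ^ (k + 1) =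
      ((r ^ (k + 1) : ℝ) : ℂ) * Complex.exp (((k + 1) * u : ℝ) * Complex.I) := by
    rw [mul_pow, ← Complex.exp_nat_mul]
    push_cast
    ring_nf
  rw [hpow, show ((k : ℂ) + 1) = ((k + 1 : ℝ) : ℂ) by push_cast; ring, Complex.div_ofReal_re,
    Complex.re_ofReal_mul, Complex.exp_ofReal_mul_I_re]

theorem hasSum_one_sub_cos_div_mul_pow {r : ℝ} (u : ℝ) (hr : |r| < 1) :
    HasSum (fun k : ℕ => (1 - cos ((k + 1) * u)) / (k + 1) * r ^ (k + 1))
      (log (1 - 2 * cos u * r + r ^ 2) / 2 - log (1 - r)) := by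
  have h := (hasSum_pow_div_log_of_abs_lt_one hr).sub (hasSum_pow_mul_cos_div u hr)
  rw [neg_sub_neg] at h
  exact h.congr_fun fun k => by ring

theorem hasSum_one_sub_cos (y : ℝ) :
    HasSum (fun g : ℕ => (-1) ^ g * y ^ (2 * (g + 1)) / (2 * (g + 1)).factorial) (1 - cos y) := by
  simpa [pow_succ, neg_div, sub_eq_add_neg, add_comm] using
    ((hasSum_nat_add_iff' 1).mpr (Real.hasSum_cos y)).neg

theorem hasSum_cosh_sub_one (y : ℝ) :
    HasSum (fun g : ℕ => y ^ (2 * (g + 1)) / (2 * (g + 1)).factorial) (cosh y - 1) := by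
  simpa using (hasSum_nat_add_iff' 1).mpr (Real.hasSum_cosh y)

theorem cosh_le_exp_abs (y : ℝ) : cosh y ≤ exp |y| := by
  rw [← cosh_abs, cosh_eq]
  have : exp (-|y|) ≤ exp |y| := exp_le_exp.mpr (by linarith [abs_nonneg y])
  linarith

theorem summable_lambert_double_series {a : ℕ → ℝ} {C q : ℝ} (ha : ∀ k, |a k| ≤ C)
    (hq0 : 0 ≤ q) (hq1 : q < 1) :
    Summable fun p : ℕ × ℕ => a p.2 * (q ^ (p.1 + 1)) ^ (p.2 + 1) := by
  have hgeom := summable_geometric_of_lt_one hq0 hq1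
  have hprod : Summable fun p : ℕ × ℕ => C * (q ^ p.1 * q ^ p.2) :=
    (hgeom.mul_of_nonneg hgeom (fun n => by positivity) fun k => by positivity).mul_left C
  refine hprod.of_norm_bounded fun p => ?_
  have hpow : (q ^ (p.1 + 1)) ^ (p.2 + 1) ≤ q ^ p.1 * q ^ p.2 := by
    rw [← pow_mul, ← pow_add]
    exact pow_le_pow_of_le_one hq0 hq1.le (by nlinarith)
  rw [norm_mul, norm_eq_abs, norm_eq_abs, abs_of_nonneg (a := (q ^ _) ^ _) (by positivity)]
  exact mul_le_mul (ha p.2) hpow (by positivity) ((abs_nonneg _).trans (ha p.2))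

theorem pow_succ_div_one_sub_pow_succ_mem_Icc {q : ℝ} (hq0 : 0 ≤ q) (hq1 : q < 1) (k : ℕ) :
    q ^ (k + 1) / (1 - q ^ (k + 1)) ∈ Set.Icc 0 (q ^ (k + 1) / (1 - q)) := by
  have hqk : q ^ (k + 1) ≤ q := pow_le_of_le_one hq0 hq1.le (Nat.succ_ne_zero k)
  exact ⟨div_nonneg (by positivity) (by linarith),
    div_le_div_of_nonneg_left (by positivity) (by linarith) (by linarith)⟩

theorem summable_cosh_taylor_lambert_double_series {q : ℝ} (u : ℝ) (hq0 : 0 ≤ q)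
    (hqu : q * exp |u| < 1) :
    Summable fun p : ℕ × ℕ => ((p.1 + 1) * |u|) ^ (2 * (p.2 + 1)) / (2 * (p.2 + 1)).factorial *
      (q ^ (p.1 + 1) / (1 - q ^ (p.1 + 1))) := by
  have hq1 : q < 1 := lt_of_le_of_lt (le_mul_of_one_le_right hq0 (one_le_exp (abs_nonneg u))) hqu
  have hw := pow_succ_div_one_sub_pow_succ_mem_Icc hq0 hq1
  have hrow : ∀ k : ℕ, HasSum
      (fun g : ℕ => ((k + 1) * |u|) ^ (2 * (g + 1)) / (2 * (g + 1)).factorial *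
        (q ^ (k + 1) / (1 - q ^ (k + 1))))
      ((cosh ((k + 1) * |u|) - 1) * (q ^ (k + 1) / (1 - q ^ (k + 1)))) :=
    fun k => (hasSum_cosh_sub_one ((k + 1) * |u|)).mul_right (q ^ (k + 1) / (1 - q ^ (k + 1)))
  have hrow_le : ∀ k : ℕ, (cosh ((k + 1) * |u|) - 1) * (q ^ (k + 1) / (1 - q ^ (k + 1))) ≤
      (1 - q)⁻¹ * (q * exp |u|) ^ (k + 1) := by
    intro k
    have hcosh : cosh ((k + 1) * |u|) - 1 ≤ exp |u| ^ (k + 1) :=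
      calc _ ≤ exp |((k + 1) * |u|)| := by linarith [cosh_le_exp_abs ((k + 1) * |u|)]
        _ = exp |u| ^ (k + 1) := by
          rw [abs_of_nonneg (by positivity : (0 : ℝ) ≤ (k + 1) * |u|), ← exp_nat_mul]
          push_cast
          rfl
    calc (cosh ((k + 1) * |u|) - 1) * (q ^ (k + 1) / (1 - q ^ (k + 1)))
        ≤ exp |u| ^ (k + 1) * (q ^ (k + 1) / (1 - q)) :=
          mul_le_mul hcosh (hw k).2 (hw k).1 (by positivity)
      _ = (1 - q)⁻¹ * (q * exp |u|) ^ (k + 1) := by rw [mul_pow]; ring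
  refine (summable_prod_of_nonneg fun p => mul_nonneg (by positivity) (hw p.1).1).mpr
    ⟨fun k => (hrow k).summable, ?_⟩
  refine Summable.of_nonneg_of_le (fun k => ?_) (fun k => (hrow k).tsum_eq ▸ hrow_le k)
    ((summable_geometric_of_lt_one (by positivity) hqu).comp_injective
      (add_left_injective 1) |>.mul_left _)
  exact (hrow k).tsum_eq ▸ mul_nonneg (by linarith [one_le_cosh ((k + 1) * |u|)]) (hw k).1

theorem summable_cos_taylor_lambert_double_series {q : ℝ} (u : ℝ) (hq0 : 0 ≤ q)
    (hqu : q * exp |u| < 1) :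
    Summable fun p : ℕ × ℕ => (-1 : ℝ) ^ p.2 * ((p.1 + 1) * u) ^ (2 * (p.2 + 1)) /
      (2 * (p.2 + 1)).factorial / (p.1 + 1) * (q ^ (p.1 + 1) / (1 - q ^ (p.1 + 1))) := by
  have hq1 : q < 1 := lt_of_le_of_lt (le_mul_of_one_le_right hq0 (one_le_exp (abs_nonneg u))) hqu
  have hw := pow_succ_div_one_sub_pow_succ_mem_Icc hq0 hq1
  refine (summable_cosh_taylor_lambert_double_series u hq0 hqu).of_norm_bounded
    fun ⟨k, g⟩ => ?_
  have hk : (1 : ℝ) ≤ k + 1 := by simp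
  calc _ = ((k + 1) * |u|) ^ (2 * (g + 1)) / (2 * (g + 1)).factorial *
        (q ^ (k + 1) / (1 - q ^ (k + 1))) / (k + 1) := by
        simp only [norm_eq_abs, abs_mul, abs_div, abs_pow, abs_neg, abs_one, one_pow, one_mul,
          Nat.abs_cast, abs_of_nonneg (hw k).1, abs_of_pos (by positivity : (0 : ℝ) < k + 1)]
        ring
    _ ≤ _ := div_le_self (mul_nonneg (by positivity) (hw k).1) hk

theorem bernoulli_two_mul_ne_zero {k : ℕ} (hk : k ≠ 0) : bernoulli (2 * k) ≠ 0 := by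
  intro h
  have hzeta := hasSum_zeta_nat hk
  rw [h, Rat.cast_zero, mul_zero, zero_div] at hzeta
  have := le_hasSum hzeta 1 fun n _ => by positivity
  norm_num at this

noncomputable def logSinCoeff (g : ℕ) : ℝ :=
  (-1 : ℝ) ^ (g + 1 + 1) * ((bernoulli (2 * (g + 1)) : ℚ) : ℝ) /
    (((g : ℝ) + 1) * ((Nat.factorial (2 * (g + 1)) : ℕ) : ℝ))

theorem pow_mul_logSinCoeff_mul_eis_sub_one (u q : ℝ) (g : ℕ) :
    u ^ (2 * (g + 1)) * logSinCoeff g * (Eis (g + 1) q - 1) =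
      -4 * ((-1 : ℝ) ^ g * u ^ (2 * (g + 1)) / (2 * (g + 1)).factorial *
        ∑' k : ℕ, ((k : ℝ) + 1) ^ (2 * (g + 1) - 1) * q ^ (k + 1) / (1 - q ^ (k + 1))) := by
  have hB : ((bernoulli (2 * (g + 1)) : ℚ) : ℝ) ≠ 0 :=
    Rat.cast_ne_zero.mpr (bernoulli_two_mul_ne_zero (Nat.succ_ne_zero g))
  rw [Eis, logSinCoeff]
  push_cast
  field_simp
  ring

theorem summable_and_hasSum_lambert_of_log {q : ℝ} (u : ℝ) (hq0 : 0 ≤ q) (hq1 : q < 1) :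
    (Summable fun n : ℕ =>
      log (1 - 2 * cos u * q ^ (n + 1) + (q ^ (n + 1)) ^ 2) / 2 - log (1 - q ^ (n + 1))) ∧
      HasSum (fun k : ℕ => (1 - cos ((k + 1) * u)) / (k + 1) * (q ^ (k + 1) / (1 - q ^ (k + 1))))
        (∑' n : ℕ, (log (1 - 2 * cos u * q ^ (n + 1) + (q ^ (n + 1)) ^ 2) / 2 -
          log (1 - q ^ (n + 1)))) := by
  have hqpow : ∀ n : ℕ, |q ^ (n + 1)| < 1 := fun n => by
    rw [abs_of_nonneg (by positivity)]; exact pow_lt_one₀ hq0 hq1 n.succ_ne_zero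
  have ha : ∀ k : ℕ, |(1 - cos ((k + 1) * u)) / (k + 1)| ≤ 2 := fun k => by
    rw [abs_div, abs_of_pos (by positivity : (0 : ℝ) < k + 1), div_le_iff₀ (by positivity),
      abs_le]
    constructor <;> nlinarith [neg_one_le_cos ((k + 1) * u), cos_le_one ((k + 1) * u),
      (Nat.cast_nonneg k : (0 : ℝ) ≤ k)]
  have hcol : ∀ k : ℕ,
      HasSum (fun n : ℕ => (1 - cos ((k + 1) * u)) / (k + 1) * (q ^ (n + 1)) ^ (k + 1))
      ((1 - cos ((k + 1) * u)) / (k + 1) * (q ^ (k + 1) / (1 - q ^ (k + 1)))) := fun k => by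
    refine ((hasSum_pow_succ_geometric (hqpow k)).mul_left _).congr_fun fun n => ?_
    simp only [← pow_mul, mul_comm (n + 1)]
  have hrow := fun n => hasSum_one_sub_cos_div_mul_pow u (hqpow n)
  obtain ⟨hlog, hlambert⟩ :=
    hasSum_rows_and_cols (summable_lambert_double_series ha hq0 hq1) hrow hcol
  exact ⟨hlog.summable, hlog.tsum_eq ▸ hlambert⟩

theorem hasSum_cos_taylor_of_lambert {q : ℝ} (u : ℝ) (hq0 : 0 ≤ q) (hqu : q * exp |u| < 1) :
    HasSum (fun g : ℕ => (-1 : ℝ) ^ g * u ^ (2 * (g + 1)) / (2 * (g + 1)).factorial *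
        ∑' k : ℕ, ((k : ℝ) + 1) ^ (2 * (g + 1) - 1) * q ^ (k + 1) / (1 - q ^ (k + 1)))
      (∑' k : ℕ, (1 - cos ((k + 1) * u)) / (k + 1) * (q ^ (k + 1) / (1 - q ^ (k + 1)))) := by
  have hF := summable_cos_taylor_lambert_double_series u hq0 hqu
  have hrow : ∀ k : ℕ, HasSum (fun g : ℕ => (-1 : ℝ) ^ g * ((k + 1) * u) ^ (2 * (g + 1)) /
      (2 * (g + 1)).factorial / (k + 1) * (q ^ (k + 1) / (1 - q ^ (k + 1))))
      ((1 - cos ((k + 1) * u)) / (k + 1) * (q ^ (k + 1) / (1 - q ^ (k + 1)))) := fun k =>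
    ((hasSum_one_sub_cos ((k + 1) * u)).div_const (k + 1)).mul_right _
  have hcol : ∀ g : ℕ, HasSum (fun k : ℕ => (-1 : ℝ) ^ g * ((k + 1) * u) ^ (2 * (g + 1)) /
      (2 * (g + 1)).factorial / (k + 1) * (q ^ (k + 1) / (1 - q ^ (k + 1))))
      ((-1 : ℝ) ^ g * u ^ (2 * (g + 1)) / (2 * (g + 1)).factorial *
        ∑' k : ℕ, ((k : ℝ) + 1) ^ (2 * (g + 1) - 1) * q ^ (k + 1) / (1 - q ^ (k + 1))) := by
    intro g
    have hsplit : ∀ k : ℕ, (-1 : ℝ) ^ g * ((k + 1) * u) ^ (2 * (g + 1)) /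
        (2 * (g + 1)).factorial / (k + 1) * (q ^ (k + 1) / (1 - q ^ (k + 1))) =
        (-1 : ℝ) ^ g * u ^ (2 * (g + 1)) / (2 * (g + 1)).factorial *
          (((k : ℝ) + 1) ^ (2 * (g + 1) - 1) * q ^ (k + 1) / (1 - q ^ (k + 1))) := fun k => by
      rw [mul_pow, ← pow_sub_one_mul (by omega : 2 * (g + 1) ≠ 0) ((k : ℝ) + 1)]
      field_simp
    rw [← tsum_mul_left, ← tsum_congr hsplit]
    exact (hF.comp_injective (Prod.mk_left_injective g)).hasSum
  obtain ⟨hlambert, hcoeff⟩ := hasSum_rows_and_cols hF hrow hcol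
  exact hlambert.tsum_eq ▸ hcoeff

theorem summable_and_hasSum_logSinCoeff_mul_eis_sub_one {q : ℝ} (u : ℝ) (hq0 : 0 ≤ q)
    (hqu : q * exp |u| < 1) :
    (Summable fun n : ℕ => 4 * log (1 - q ^ (n + 1)) -
        2 * log (1 - 2 * cos u * q ^ (n + 1) + q ^ (2 * (n + 1)))) ∧
      HasSum (fun g : ℕ => u ^ (2 * (g + 1)) * logSinCoeff g * (Eis (g + 1) q - 1))
        (∑' n : ℕ, (4 * log (1 - q ^ (n + 1)) -
          2 * log (1 - 2 * cos u * q ^ (n + 1) + q ^ (2 * (n + 1))))) := by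
  have hq1 : q < 1 := lt_of_le_of_lt (le_mul_of_one_le_right hq0 (one_le_exp (abs_nonneg u))) hqu
  obtain ⟨hlog, hlambert⟩ := summable_and_hasSum_lambert_of_log u hq0 hq1
  have hL := hlog.hasSum.mul_left (-4) |>.congr_fun fun n : ℕ => show
      4 * log (1 - q ^ (n + 1)) - 2 * log (1 - 2 * cos u * q ^ (n + 1) + q ^ (2 * (n + 1))) =
        -4 * (log (1 - 2 * cos u * q ^ (n + 1) + (q ^ (n + 1)) ^ 2) / 2 - log (1 - q ^ (n + 1))) by
    rw [← pow_mul, mul_comm (n + 1)]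
    ring
  refine ⟨hL.summable, ?_⟩
  rw [hL.tsum_eq, ← hlambert.tsum_eq]
  exact ((hasSum_cos_taylor_of_lambert u hq0 hqu).mul_left (-4)).congr_fun fun g =>
    pow_mul_logSinCoeff_mul_eis_sub_one u q g

theorem sin_div_pos {y : ℝ} (hy0 : y ≠ 0) (hy : |y| < π) : 0 < sin y / y := by
  have heven : sin y / y = sin |y| / |y| := by
    rcases abs_choice y with h | h <;> rw [h]
    rw [sin_neg, neg_div_neg_eq]
  rw [heven]
  exact div_pos (sin_pos_of_pos_of_lt_pi (abs_pos.mpr hy0) hy) (abs_pos.mpr hy0)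

theorem hasSum_log_one_sub_sq_div_sq {x : ℝ} (hx0 : x ≠ 0) (hx : |x| < 1) :
    HasSum (fun j : ℕ => log (1 - x ^ 2 / (j + 1) ^ 2)) (log (sin (π * x) / (π * x))) := by
  have hfactor : ∀ j : ℕ, 0 < 1 - x ^ 2 / (j + 1) ^ 2 := fun j => by
    have hx2 : x ^ 2 < 1 := by rwa [sq_lt_one_iff_abs_lt_one]
    have hj : x ^ 2 / (j + 1) ^ 2 ≤ x ^ 2 := div_le_self (sq_nonneg x) (one_le_pow₀ (by simp))
    linarith
  have hsummable : Summable fun j : ℕ => log (1 - x ^ 2 / (j + 1) ^ 2) := by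
    have h : Summable fun j : ℕ => -(x ^ 2 / ((j : ℝ) + 1) ^ 2) := by
      simpa using (summable_pow_div_add (x ^ 2) 2 1 one_lt_two).of_norm.neg
    simpa only [← sub_eq_add_neg] using Real.summable_log_one_add_of_summable h
  rw [hsummable.hasSum_iff_tendsto_nat]
  have hprod := ((tendsto_euler_sin_prod x).div_const (π * x)).log
    (sin_div_pos (by positivity) (by rw [abs_mul, abs_of_pos pi_pos]; nlinarith [pi_pos])).ne'
  refine hprod.congr fun n => ?_
  rw [← log_prod fun j _ => (hfactor j).ne', mul_div_cancel_left₀ _ (by positivity)]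

theorem hasSum_two_mul_sq_div_sq_pow_div (x : ℝ) (m : ℕ) :
    HasSum (fun j : ℕ => 2 * (x ^ 2 / (j + 1) ^ 2) ^ (m + 1) / (m + 1))
      ((2 * π * x) ^ (2 * (m + 1)) * logSinCoeff m) := by
  have hzeta : HasSum (fun j : ℕ => 1 / ((j : ℝ) + 1) ^ (2 * (m + 1)))
      ((-1) ^ (m + 1 + 1) * 2 ^ (2 * (m + 1) - 1) * π ^ (2 * (m + 1)) *
        ((bernoulli (2 * (m + 1)) : ℚ) : ℝ) / (2 * (m + 1)).factorial) := by
    simpa using (hasSum_nat_add_iff' 1).mpr (hasSum_zeta_nat (k := m + 1) (by omega))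
  have hval : 2 * x ^ (2 * (m + 1)) / (m + 1) * ((-1) ^ (m + 1 + 1) * 2 ^ (2 * (m + 1) - 1) *
      π ^ (2 * (m + 1)) * ((bernoulli (2 * (m + 1)) : ℚ) : ℝ) / (2 * (m + 1)).factorial) =
      (2 * π * x) ^ (2 * (m + 1)) * logSinCoeff m := by
    rw [mul_pow, mul_pow, show 2 * (m + 1) - 1 = 2 * m + 1 by omega]
    unfold logSinCoeff
    field_simp
    ring
  rw [← hval]
  exact (hzeta.mul_left _).congr_fun fun j => by
    simp only [div_pow, ← pow_mul]
    field_simp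

theorem hasSum_neg_two_log_sin_div {u : ℝ} (hu0 : u ≠ 0) (hu : |u| < 2 * π) :
    HasSum (fun g : ℕ => u ^ (2 * (g + 1)) * logSinCoeff g)
      (-2 * log (sin (u / 2) / (u / 2))) := by
  set x := u / (2 * π) with hx_def
  have hx : |x| < 1 := by
    rwa [abs_div, abs_of_pos (by positivity : 0 < 2 * π), div_lt_one (by positivity)]
  have hlog := (hasSum_log_one_sub_sq_div_sq (by positivity : x ≠ 0) hx).mul_left (-2)
  rw [show π * x = u / 2 by rw [hx_def]; field_simp] at hlog
  have ht : ∀ j : ℕ, |x ^ 2 / (j + 1) ^ 2| < 1 := fun j => by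
    rw [abs_div, abs_pow, abs_pow, div_lt_one (by positivity)]
    calc |x| ^ 2 < 1 := by nlinarith [abs_nonneg x]
      _ ≤ |(j : ℝ) + 1| ^ 2 := one_le_pow₀ (by rw [abs_of_pos (by positivity)]; simp)
  have hrow : ∀ j : ℕ, HasSum (fun m : ℕ => 2 * (x ^ 2 / (j + 1) ^ 2) ^ (m + 1) / (m + 1))
      (-2 * log (1 - x ^ 2 / (j + 1) ^ 2)) := fun j => by
    simpa only [mul_div_assoc, mul_neg, neg_mul] using
      (hasSum_pow_div_log_of_abs_lt_one (ht j)).mul_left 2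
  have hcol : ∀ m : ℕ, HasSum (fun j : ℕ => 2 * (x ^ 2 / (j + 1) ^ 2) ^ (m + 1) / (m + 1))
      (u ^ (2 * (m + 1)) * logSinCoeff m) := fun m => by
    simpa only [show 2 * π * x = u by rw [hx_def]; field_simp] using
      hasSum_two_mul_sq_div_sq_pow_div x m
  have hD : Summable fun p : ℕ × ℕ => 2 * (x ^ 2 / (p.1 + 1) ^ 2) ^ (p.2 + 1) / (p.2 + 1) := by
    refine (summable_prod_of_nonneg fun p => by positivity).mpr
      ⟨fun j => (hrow j).summable, hlog.summable.congr fun j => (hrow j).tsum_eq.symm⟩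
  obtain ⟨hrows, hcols⟩ := hasSum_rows_and_cols hD hrow hcol
  rwa [← hrows.unique hlog]

theorem stmt0_general (q u : ℝ) (hq0 : 0 < q)
    (hu0 : 0 < |u|) (hu : |u| < min (2 * Real.pi) (Real.log (1 / q))) :
    (Summable fun n : ℕ =>
      |4 * Real.log (1 - q ^ (n + 1)) -
        2 * Real.log (1 - 2 * Real.cos u * q ^ (n + 1) + q ^ (2 * (n + 1)))|) ∧
    (Summable fun g : ℕ =>
      |u ^ (2 * (g + 1)) *
        ((-1 : ℝ) ^ (g + 1 + 1) * ((bernoulli (2 * (g + 1)) : ℚ) : ℝ) /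
          (((g : ℝ) + 1) * ((Nat.factorial (2 * (g + 1)) : ℕ) : ℝ))) *
        Eis (g + 1) q|) ∧
    (-2) * Real.log (Real.sin (u / 2) / (u / 2)) +
      ∑' n : ℕ, (4 * Real.log (1 - q ^ (n + 1)) -
        2 * Real.log (1 - 2 * Real.cos u * q ^ (n + 1) + q ^ (2 * (n + 1)))) =
      ∑' g : ℕ, u ^ (2 * (g + 1)) *
        ((-1 : ℝ) ^ (g + 1 + 1) * ((bernoulli (2 * (g + 1)) : ℚ) : ℝ) /
          (((g : ℝ) + 1) * ((Nat.factorial (2 * (g + 1)) : ℕ) : ℝ))) *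
        Eis (g + 1) q := by
  obtain ⟨hu2π, hulog⟩ := lt_min_iff.mp hu
  have hqu : q * exp |u| < 1 := by
    rwa [← lt_div_iff₀' hq0, ← exp_log (by positivity : 0 < 1 / q), exp_lt_exp]
  obtain ⟨hq, heis⟩ := summable_and_hasSum_logSinCoeff_mul_eis_sub_one u hq0.le hqu
  have hsum : HasSum (fun g : ℕ => u ^ (2 * (g + 1)) * logSinCoeff g * Eis (g + 1) q)
      (-2 * log (sin (u / 2) / (u / 2)) + ∑' n : ℕ, (4 * log (1 - q ^ (n + 1)) -
        2 * log (1 - 2 * cos u * q ^ (n + 1) + q ^ (2 * (n + 1))))) :=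
    ((hasSum_neg_two_log_sin_div (abs_pos.mp hu0) hu2π).add heis).congr_fun fun g => by ring
  exact ⟨summable_abs_iff.mpr hq, summable_abs_iff.mpr hsum.summable, hsum.tsum_eq.symm⟩

/-- The logarithmic identity behind Corollary 2 of Maulik–Pandharipande–Thomas:
`-2 log(sin(u/2)/(u/2)) + ∑_{n≥1} [4 log(1-qⁿ) - 2 log(1 - 2 cos(u) qⁿ + q^{2n})]
  = ∑_{g≥1} u^{2g} ((-1)^{g+1} B_{2g}/(g (2g)!)) E_{2g}(q)`,
with both series converging absolutely. -/
theorem stmt0 (q u : ℝ) (hq0 : 0 < q) (hq1 : q < 1)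
    (hu0 : 0 < |u|) (hu : |u| < min (2 * Real.pi) (Real.log (1 / q))) :
    (Summable fun n : ℕ =>
      |4 * Real.log (1 - q ^ (n + 1)) -
        2 * Real.log (1 - 2 * Real.cos u * q ^ (n + 1) + q ^ (2 * (n + 1)))|) ∧
    (Summable fun g : ℕ =>
      |u ^ (2 * (g + 1)) *
        ((-1 : ℝ) ^ (g + 1 + 1) * ((bernoulli (2 * (g + 1)) : ℚ) : ℝ) /
          (((g : ℝ) + 1) * ((Nat.factorial (2 * (g + 1)) : ℕ) : ℝ))) *
        Eis (g + 1) q|) ∧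
    (-2) * Real.log (Real.sin (u / 2) / (u / 2)) +
      ∑' n : ℕ, (4 * Real.log (1 - q ^ (n + 1)) -
        2 * Real.log (1 - 2 * Real.cos u * q ^ (n + 1) + q ^ (2 * (n + 1)))) =
      ∑' g : ℕ, u ^ (2 * (g + 1)) *
        ((-1 : ℝ) ^ (g + 1 + 1) * ((bernoulli (2 * (g + 1)) : ℚ) : ℝ) /
          (((g : ℝ) + 1) * ((Nat.factorial (2 * (g + 1)) : ℕ) : ℝ))) *
        Eis (g + 1) q :=
  stmt0_general q u hq0 hu0 hu
end

section
/- For every real number u with 0 < |u| < 2π, the series Σ_{g=1}^∞ ((−1)^g B_{2g} / (2g·(2g)!)) · u^{2g} converges and equals log( sin(u/2)/(u/2) ). -/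
open Real Filter Finset Topology
open scoped Nat

/-!
Put `x = u / (2π)`, so `0 < |x| < 1`. Euler's product `sin(πx) = πx ∏ₙ (1 - x²/n²)` gives
`log(sin(πx)/(πx)) = ∑ₙ log(1 - x²/n²)`, and expanding every logarithm yields the double series
`-∑ₙ ∑ₖ x^{2k}/(k n^{2k})`. Its terms have one sign and are dominated by `x^{2k-2}/n²`, so it may be
summed over `n` first, which produces `-∑ₖ ζ(2k) x^{2k}/k`; Euler's evaluation of `ζ(2k)` through
`B_{2k}` then gives the coefficients of the statement.
-/

theorem Summable.prod_fiberwise_swap {α β γ : Type*} [AddCommMonoid α] [TopologicalSpace α]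
    [ContinuousAdd α] [T3Space α] {f : β × γ → α} {g : β → α} {h : γ → α} {a : α}
    (hf : Summable f) (hrow : ∀ b, HasSum (fun c ↦ f (b, c)) (g b))
    (hcol : ∀ c, HasSum (fun b ↦ f (b, c)) (h c)) (hg : HasSum g a) : HasSum h a := by
  have hswap := ((Equiv.prodComm γ β).hasSum_iff.2 hf.hasSum).prod_fiberwise hcol
  rwa [(hf.hasSum.prod_fiberwise hrow).unique hg] at hswap

lemma Real.sin_pi_mul_ne_zero_of_abs_lt_one {x : ℝ} (hx0 : x ≠ 0) (hx : |x| < 1) :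
    sin (π * x) ≠ 0 := by
  refine sin_ne_zero_iff.2 fun n hn ↦ hx0 ?_
  have hnx : (n : ℝ) = x := mul_right_cancel₀ pi_ne_zero (hn.trans (mul_comm π x))
  have : |n| < 1 := by rw [← hnx] at hx; exact_mod_cast hx
  rw [← hnx, Int.abs_lt_one_iff.1 this, Int.cast_zero]

lemma sq_div_succ_sq_lt_one {x : ℝ} (hx : |x| < 1) (n : ℕ) : x ^ 2 / ((n : ℝ) + 1) ^ 2 < 1 := by
  rw [div_lt_one (by positivity)]
  nlinarith [sq_lt_one_iff_abs_lt_one x |>.2 hx, n.cast_nonneg (α := ℝ)]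

lemma hasSum_one_div_succ_pow_two_mul {k : ℕ} (hk : k ≠ 0) :
    HasSum (fun n : ℕ ↦ 1 / ((n : ℝ) + 1) ^ (2 * k))
      ((-1 : ℝ) ^ (k + 1) * (2 : ℝ) ^ (2 * k - 1) * π ^ (2 * k) *
        bernoulli (2 * k) / (2 * k)!) := by
  simpa [hk] using (hasSum_nat_add_iff' 1).2 (hasSum_zeta_nat hk)

lemma Real.hasSum_log_one_sub_sq_div_succ_sq {x : ℝ} (hx0 : x ≠ 0) (hx : |x| < 1) :
    HasSum (fun n : ℕ ↦ log (1 - x ^ 2 / ((n : ℝ) + 1) ^ 2)) (log (sin (π * x) / (π * x))) := by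
  have hπx : π * x ≠ 0 := mul_ne_zero pi_ne_zero hx0
  have hfactor (n : ℕ) : 0 < 1 - x ^ 2 / ((n : ℝ) + 1) ^ 2 :=
    sub_pos.2 (sq_div_succ_sq_lt_one hx n)
  have hprod : Tendsto (fun N : ℕ ↦ ∏ j ∈ range N, (1 - x ^ 2 / ((j : ℝ) + 1) ^ 2)) atTop
      (𝓝 (sin (π * x) / (π * x))) := by
    simpa only [mul_div_cancel_left₀ _ hπx] using (tendsto_euler_sin_prod x).div_const (π * x)
  have hlog := (continuousAt_log
    (div_ne_zero (sin_pi_mul_ne_zero_of_abs_lt_one hx0 hx) hπx)).tendsto.comp hprod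
  -- the terms are `≤ 0`, so convergence of the partial sums suffices
  suffices HasSum (fun n : ℕ ↦ -log (1 - x ^ 2 / ((n : ℝ) + 1) ^ 2))
      (-log (sin (π * x) / (π * x))) by
    simpa using this.neg
  rw [hasSum_iff_tendsto_nat_of_nonneg fun n ↦
    neg_nonneg.2 (log_nonpos (hfactor n).le (sub_le_self _ (by positivity)))]
  refine hlog.neg.congr fun N ↦ ?_
  rw [Function.comp_apply, log_prod fun j _ ↦ (hfactor j).ne', sum_neg_distrib]

lemma summable_sq_div_succ_sq_pow_succ_div {x : ℝ} (hx : |x| < 1) :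
    Summable fun p : ℕ × ℕ ↦ (x ^ 2 / ((p.1 : ℝ) + 1) ^ 2) ^ (p.2 + 1) / ((p.2 : ℝ) + 1) := by
  have hrow : Summable fun n : ℕ ↦ 1 / ((n : ℝ) + 1) ^ 2 := by
    simpa using (summable_nat_add_iff 1).2 (summable_one_div_nat_pow.2 one_lt_two)
  have hcol : Summable fun k : ℕ ↦ (x ^ 2) ^ k :=
    summable_geometric_of_lt_one (sq_nonneg x) (sq_lt_one_iff_abs_lt_one x |>.2 hx)
  refine (hrow.mul_of_nonneg hcol (fun _ ↦ by positivity) fun _ ↦ by positivity).of_nonneg_of_le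
    (fun _ ↦ by positivity) fun ⟨n, k⟩ ↦ ?_
  have hn : (1 : ℝ) ≤ ((n : ℝ) + 1) ^ 2 := one_le_pow₀ (by simp)
  calc (x ^ 2 / ((n : ℝ) + 1) ^ 2) ^ (k + 1) / ((k : ℝ) + 1)
      ≤ (x ^ 2 / ((n : ℝ) + 1) ^ 2) ^ k * (x ^ 2 / ((n : ℝ) + 1) ^ 2) := by
        rw [← pow_succ]; exact div_le_self (by positivity) (by simp)
    _ ≤ (x ^ 2) ^ k * (1 / ((n : ℝ) + 1) ^ 2) := by
        gcongr
        · exact div_le_self (sq_nonneg x) hn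
        · exact (sq_lt_one_iff_abs_lt_one x |>.2 hx).le
    _ = 1 / ((n : ℝ) + 1) ^ 2 * (x ^ 2) ^ k := mul_comm _ _

lemma Real.hasSum_neg_log_sin_pi_mul_div {x : ℝ} (hx0 : x ≠ 0) (hx : |x| < 1) :
    HasSum (fun k : ℕ ↦ (-1 : ℝ) ^ (k + 2) * (2 : ℝ) ^ (2 * (k + 1) - 1) * π ^ (2 * (k + 1)) *
        bernoulli (2 * (k + 1)) / (2 * (k + 1))! * (x ^ (2 * (k + 1)) / ((k : ℝ) + 1)))
      (-log (sin (π * x) / (π * x))) := by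
  have hrow (n : ℕ) : HasSum (fun k : ℕ ↦ (x ^ 2 / ((n : ℝ) + 1) ^ 2) ^ (k + 1) / ((k : ℝ) + 1))
      (-log (1 - x ^ 2 / ((n : ℝ) + 1) ^ 2)) := by
    refine hasSum_pow_div_log_of_abs_lt_one ?_
    rw [abs_of_nonneg (by positivity)]
    exact sq_div_succ_sq_lt_one hx n
  have hcol (k : ℕ) : HasSum (fun n : ℕ ↦ (x ^ 2 / ((n : ℝ) + 1) ^ 2) ^ (k + 1) / ((k : ℝ) + 1))
      ((-1 : ℝ) ^ (k + 2) * (2 : ℝ) ^ (2 * (k + 1) - 1) * π ^ (2 * (k + 1)) *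
        bernoulli (2 * (k + 1)) / (2 * (k + 1))! * (x ^ (2 * (k + 1)) / ((k : ℝ) + 1))) := by
    refine ((hasSum_one_div_succ_pow_two_mul k.succ_ne_zero).mul_right
      (x ^ (2 * (k + 1)) / ((k : ℝ) + 1))).congr_fun fun n ↦ ?_
    rw [div_pow, ← pow_mul, ← pow_mul]
    field_simp
  exact (summable_sq_div_succ_sq_pow_succ_div hx).prod_fiberwise_swap hrow hcol
    (hasSum_log_one_sub_sq_div_succ_sq hx0 hx).neg

/-- For `0 < |u| < 2π`, the series `∑_{g≥1} ((-1)^g B_{2g}/(2g·(2g)!)) u^{2g}` converges to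
`log(sin(u/2)/(u/2))`. -/
theorem stmt1 (u : ℝ) (hu0 : 0 < |u|) (hu2 : |u| < 2 * Real.pi) :
    HasSum
      (fun g : ℕ =>
        ((-1 : ℝ) ^ (g + 1) * ((bernoulli (2 * (g + 1)) : ℚ) : ℝ) /
            ((2 * ((g : ℝ) + 1)) * ((Nat.factorial (2 * (g + 1)) : ℕ) : ℝ))) *
          u ^ (2 * (g + 1)))
      (Real.log (Real.sin (u / 2) / (u / 2))) := by
  have hx0 : u / (2 * π) ≠ 0 := div_ne_zero (abs_pos.1 hu0) (by positivity)
  have hx : |u / (2 * π)| < 1 := by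
    rwa [abs_div, abs_of_pos (by positivity : (0 : ℝ) < 2 * π), div_lt_one (by positivity)]
  have h := (hasSum_neg_log_sin_pi_mul_div hx0 hx).neg
  rw [neg_neg, show π * (u / (2 * π)) = u / 2 by field_simp] at h
  refine h.congr_fun fun g ↦ ?_
  rw [show 2 * (g + 1) - 1 = 2 * g + 1 by omega, div_pow, mul_pow]
  field_simp
  ring
end

section
/- Let μ be a nonempty Young diagram, let m ≥ 1, and let ν_0 ⊇ ν_1 ⊇ ⋯ ⊇ ν_m be Young diagrams with ν_0 = μ, ν_m = ∅, and ν_{m−1} ≠ μ. Set ρ_j = μ ∖ ν_j, so that ∅ = ρ_0 ⊆ ρ_1 ⊆ ⋯ ⊆ ρ_m = μ and ρ_{m−1} ≠ ∅. Then −2·c_0(ρ_{m−1}) + Σ_{r∈ℤ} ( d_r(μ)² − Σ_{j=1}^m ( d_r(ρ_j) − d_r(ρ_{j−1}) )² ) < 0, where the outer sum over r ∈ ℤ has only finitely many nonzero terms. (This is the strict negativity of the constant term of the equivariant vertex contribution, which is the combinatorial core of the paper's divisibility lemma for the 1-leg stable pairs vertex.) -/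
/-- `cCount ρ r` is the number of cells `(a,b) ∈ ρ` with `a - b = r` (difference in `ℤ`). -/
def cCount (ρ : Finset (ℕ × ℕ)) (r : ℤ) : ℕ :=
  (ρ.filter fun c => (c.1 : ℤ) - (c.2 : ℤ) = r).card

/-- `dCount ρ r = c_r(ρ) - c_{r+1}(ρ)`. -/
def dCount (ρ : Finset (ℕ × ℕ)) (r : ℤ) : ℤ :=
  (cCount ρ r : ℤ) - (cCount ρ (r + 1) : ℤ)

/-!
Write `τ_j = ρ_{j+1} \ ρ_j` and `S(σ) = ∑_r d_r(σ)²`. As `d_r(τ_j) = d_r(ρ_{j+1}) - d_r(ρ_j)` and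
`∑_r d_r(μ)² = 2 c_0(μ)` (for a Young diagram `d_r(μ) ∈ {0, 1}` when `r ≥ 0` and `d_r(μ) ∈ {0, -1}`
when `r < 0`), the left-hand side is `2 c_0(μ) - 2 c_0(ρ_{m-1}) - ∑_j S(τ_j)`.

For any finite `σ` the sums of `d_r(σ)` over `r ≥ k` and over `r < k` telescope to `±c_k(σ)`, so
`d² ≥ |d|` gives `S(σ) ≥ 2 c_k(σ)` for every `k`. With `k = 0`, the last step absorbs
`2 c_0(τ_{m-1}) = 2 c_0(μ) - 2 c_0(ρ_{m-1})`, while the steps `j < m - 1` contribute at least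
`2 c_k(ρ_{m-1}) > 0`, where `k` is the diagonal of a cell of the nonempty `ρ_{m-1}`.
-/

open Finset

section FiniteSets

variable {σ τ : Finset (ℕ × ℕ)} {n : ℕ}

theorem cCount_pos_of_mem {x : ℕ × ℕ} (hx : x ∈ σ) : 0 < cCount σ (x.1 - x.2) :=
  card_pos.mpr ⟨x, mem_filter.mpr ⟨hx, rfl⟩⟩

theorem cCount_sdiff (h : σ ⊆ τ) (r : ℤ) :
    (cCount (τ \ σ) r : ℤ) = cCount τ r - cCount σ r := by
  have hfilter : (τ \ σ).filter (fun c => (c.1 : ℤ) - c.2 = r) =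
      τ.filter (fun c => (c.1 : ℤ) - c.2 = r) \ σ.filter (fun c => (c.1 : ℤ) - c.2 = r) := by
    ext c
    simp only [mem_filter, mem_sdiff]
    tauto
  rw [cCount, cCount, cCount, hfilter, card_sdiff_of_subset (filter_subset_filter _ h),
    Nat.cast_sub (card_le_card (filter_subset_filter _ h))]

theorem dCount_sdiff (h : σ ⊆ τ) (r : ℤ) :
    dCount (τ \ σ) r = dCount τ r - dCount σ r := by
  simp only [dCount, cCount_sdiff h]
  ring

theorem exists_subset_range_sprod (σ : Finset (ℕ × ℕ)) :
    ∃ n : ℕ, σ ⊆ range n ×ˢ range n := by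
  refine ⟨σ.sup (fun c => max c.1 c.2) + 1, fun c hc => ?_⟩
  have := le_sup (f := fun c : ℕ × ℕ => max c.1 c.2) hc
  simp only [mem_product, mem_range]
  omega

theorem cCount_eq_zero_of_subset (hσ : σ ⊆ range n ×ˢ range n) {r : ℤ}
    (hr : r ∉ Ioo (-n : ℤ) n) : cCount σ r = 0 := by
  refine card_eq_zero.mpr (filter_eq_empty_iff.mpr fun c hc hcr => hr ?_)
  have := mem_product.mp (hσ hc)
  simp only [mem_range] at this
  simp only [mem_Ioo]
  omega

theorem dCount_eq_zero_of_subset (hσ : σ ⊆ range n ×ˢ range n) {r : ℤ}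
    (hr : r ∉ Ico (-n : ℤ) n) : dCount σ r = 0 := by
  simp only [mem_Ico, not_and_or, not_le, not_lt] at hr
  rw [dCount, cCount_eq_zero_of_subset hσ (by simp only [mem_Ioo]; omega),
    cCount_eq_zero_of_subset hσ (by simp only [mem_Ioo]; omega)]
  simp

theorem sum_Ico_dCount (σ : Finset (ℕ × ℕ)) {a b : ℤ} (hab : a ≤ b) :
    ∑ r ∈ Ico a b, dCount σ r = cCount σ a - cCount σ b := by
  induction b, hab using Int.leInduction with
  | base => simp
  | succ b hab ih =>
    rw [← insert_Ico_right_eq_Ico_add_one hab, sum_insert right_notMem_Ico, ih, dCount]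
    ring

theorem two_mul_cCount_le_sum_sq_dCount (hσ : σ ⊆ range n ×ˢ range n) (k : ℤ) :
    2 * (cCount σ k : ℤ) ≤ ∑ r ∈ Ico (-n : ℤ) n, dCount σ r ^ 2 := by
  by_cases hk : k ∈ Ioo (-n : ℤ) n
  · obtain ⟨hlo, hhi⟩ := mem_Ioo.mp hk
    have hzero : ∀ r ∉ Ioo (-n : ℤ) n, (cCount σ r : ℤ) = 0 := fun r hr => by
      exact_mod_cast cCount_eq_zero_of_subset hσ hr
    have habs : ∀ s : Finset ℤ, |∑ r ∈ s, dCount σ r| ≤ ∑ r ∈ s, dCount σ r ^ 2 := fun s =>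
      (abs_sum_le_sum_abs _ _).trans <| sum_le_sum fun r _ => by
        rw [← Int.natCast_natAbs]; exact Int.natAbs_le_self_sq _
    have hlow := habs (Ico (-n) k)
    have hhigh := habs (Ico k n)
    rw [sum_Ico_dCount σ hlo.le, hzero (-n) (by simp), zero_sub, abs_neg, Nat.abs_cast] at hlow
    rw [sum_Ico_dCount σ hhi.le, hzero n (by simp), sub_zero, Nat.abs_cast] at hhigh
    rw [← Ico_union_Ico_eq_Ico hlo.le hhi.le, sum_union (Ico_disjoint_Ico_consecutive _ _ _)]
    linarith
  · rw [cCount_eq_zero_of_subset hσ hk]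
    simpa using sum_nonneg fun r _ => sq_nonneg (dCount σ r)

end FiniteSets

namespace YoungDiagram

theorem cCount_transpose (μ : YoungDiagram) (r : ℤ) :
    cCount μ.transpose.cells r = cCount μ.cells (-r) := by
  refine card_bij (fun c _ => c.swap) (fun c hc => ?_) (fun _ _ _ _ h => Prod.swap_injective h)
    (fun c hc => ⟨c.swap, ?_, c.swap_swap⟩) <;>
  · simp only [mem_filter, mem_cells, mem_transpose, Prod.fst_swap, Prod.snd_swap,
      Prod.swap_swap] at hc ⊢
    exact ⟨hc.1, by omega⟩

theorem cCount_add_one_le (μ : YoungDiagram) {r : ℤ} (hr : 0 ≤ r) :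
    cCount μ.cells (r + 1) ≤ cCount μ.cells r := by
  refine card_le_card_of_injOn (fun c => (c.1 - 1, c.2)) (fun c hc => ?_)
    (fun c hc c' hc' h => ?_)
  · simp only [coe_filter, Set.mem_ofPred_eq, mem_cells] at hc ⊢
    refine ⟨μ.up_left_mem (Nat.sub_le _ _) le_rfl hc.1, ?_⟩
    omega
  · simp only [coe_filter, Set.mem_ofPred_eq, Prod.mk.injEq] at hc hc' h
    exact Prod.ext (by omega) h.2

theorem cCount_le_add_one (μ : YoungDiagram) {r : ℤ} (hr : 0 ≤ r) :
    cCount μ.cells r ≤ cCount μ.cells (r + 1) + 1 := by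
  suffices h : cCount μ.cells r - 1 ≤ cCount μ.cells (r + 1) by omega
  refine (pred_card_le_card_erase (a := (r.toNat, 0))).trans <| card_le_card_of_injOn
    (fun c => (c.1, c.2 - 1)) (fun c hc => ?_) (fun c hc c' hc' h => ?_)
  · simp only [coe_erase, coe_filter, Set.mem_sdiff, Set.mem_ofPred_eq, mem_cells,
      Set.mem_singleton_iff, Prod.ext_iff, not_and] at hc ⊢
    refine ⟨μ.up_left_mem le_rfl (Nat.sub_le _ _) hc.1.1, ?_⟩
    have := hc.2
    omega
  · simp only [coe_erase, coe_filter, Set.mem_sdiff, Set.mem_ofPred_eq,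
      Set.mem_singleton_iff, Prod.ext_iff, not_and] at hc hc' h
    exact Prod.ext h.1 (by omega)

theorem dCount_sq_of_nonneg (μ : YoungDiagram) {r : ℤ} (hr : 0 ≤ r) :
    dCount μ.cells r ^ 2 = dCount μ.cells r := by
  have h₁ := μ.cCount_add_one_le hr
  have h₂ := μ.cCount_le_add_one hr
  obtain h | h : dCount μ.cells r = 0 ∨ dCount μ.cells r = 1 := by unfold dCount; omega
  all_goals rw [h]; norm_num

theorem dCount_sq_of_neg (μ : YoungDiagram) {r : ℤ} (hr : r < 0) :
    dCount μ.cells r ^ 2 = -dCount μ.cells r := by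
  have h : dCount μ.cells r = -dCount μ.transpose.cells (-r - 1) := by
    rw [dCount, dCount, cCount_transpose, cCount_transpose, show -(-r - 1) = r + 1 by ring,
      show -(-r - 1 + 1) = r by ring]
    ring
  rw [h, neg_sq, neg_neg, dCount_sq_of_nonneg _ (by omega)]

theorem sum_sq_dCount_cells {μ : YoungDiagram} {n : ℕ} (hμ : μ.cells ⊆ range n ×ˢ range n) :
    ∑ r ∈ Ico (-n : ℤ) n, dCount μ.cells r ^ 2 = 2 * cCount μ.cells 0 := by
  have h0 : ∀ r ∉ Ioo (-n : ℤ) n, (cCount μ.cells r : ℤ) = 0 := fun r hr => by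
    exact_mod_cast cCount_eq_zero_of_subset hμ hr
  rw [← Ico_union_Ico_eq_Ico (by omega : (-n : ℤ) ≤ 0) (by omega : (0 : ℤ) ≤ n),
    sum_union (Ico_disjoint_Ico_consecutive _ _ _),
    sum_congr rfl fun r hr => μ.dCount_sq_of_neg (mem_Ico.mp hr).2,
    sum_congr rfl fun r hr => μ.dCount_sq_of_nonneg (mem_Ico.mp hr).1, sum_neg_distrib,
    sum_Ico_dCount _ (by omega), sum_Ico_dCount _ (by omega), h0 (-n) (by simp), h0 n (by simp)]
  ring

end YoungDiagram

section Chains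

variable {ρ : ℕ → Finset (ℕ × ℕ)} {m n : ℕ}

theorem sum_range_cCount_sdiff (hρ0 : ρ 0 = ∅) (hmono : ∀ j < m, ρ j ⊆ ρ (j + 1)) (k : ℤ) :
    ∑ j ∈ range m, (cCount (ρ (j + 1) \ ρ j) k : ℤ) = cCount (ρ m) k := by
  rw [sum_congr rfl fun j hj => cCount_sdiff (hmono j (mem_range.mp hj)) k,
    sum_range_sub (fun j => (cCount (ρ j) k : ℤ)), hρ0]
  simp [cCount]

theorem two_mul_cCount_sub_lt_sum_sum_sq_dCount (hbox : ∀ j, ρ j ⊆ range n ×ˢ range n)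
    (hρ0 : ρ 0 = ∅) (hmono : ∀ j < m, ρ j ⊆ ρ (j + 1)) (hne : (ρ (m - 1)).Nonempty) :
    2 * ((cCount (ρ m) 0 : ℤ) - cCount (ρ (m - 1)) 0) <
      ∑ j ∈ range m, ∑ r ∈ Ico (-n : ℤ) n, (dCount (ρ (j + 1)) r - dCount (ρ j) r) ^ 2 := by
  obtain ⟨x, hx⟩ := hne
  obtain ⟨m, rfl⟩ : ∃ k, m = k + 1 := ⟨m - 1, by cases m <;> simp_all⟩
  rw [Nat.add_sub_cancel] at hx ⊢
  have hstep : ∀ j < m + 1, ∀ k : ℤ, 2 * (cCount (ρ (j + 1) \ ρ j) k : ℤ) ≤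
      ∑ r ∈ Ico (-n : ℤ) n, (dCount (ρ (j + 1)) r - dCount (ρ j) r) ^ 2 := fun j hj k => by
    simp only [← dCount_sdiff (hmono j hj)]
    exact two_mul_cCount_le_sum_sq_dCount (sdiff_subset.trans (hbox _)) k
  have hlast := hstep m (by omega) 0
  have hinit : 2 * (cCount (ρ m) (x.1 - x.2) : ℤ) ≤
      ∑ j ∈ range m, ∑ r ∈ Ico (-n : ℤ) n, (dCount (ρ (j + 1)) r - dCount (ρ j) r) ^ 2 := by
    rw [← sum_range_cCount_sdiff hρ0 (fun j hj => hmono j (by omega)), mul_sum]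
    exact sum_le_sum fun j hj => hstep j (Nat.lt_succ_of_lt (mem_range.mp hj)) _
  have hpos : (0 : ℤ) < cCount (ρ m) (x.1 - x.2) := by exact_mod_cast cCount_pos_of_mem hx
  rw [cCount_sdiff (hmono m (by omega))] at hlast
  rw [sum_range_succ]
  linarith

end Chains

theorem stmt5_general (μ : YoungDiagram) (m : ℕ)
    (ν : ℕ → YoungDiagram) (hν0 : ν 0 = μ) (hνm : ν m = ⊥)
    (hchain : ∀ j < m, ν (j + 1) ≤ ν j) (hne : ν (m - 1) ≠ μ) :
    (Set.Finite {r : ℤ |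
      dCount μ.cells r ^ 2 -
        ∑ j ∈ Finset.range m,
          (dCount (μ.cells \ (ν (j + 1)).cells) r -
            dCount (μ.cells \ (ν j).cells) r) ^ 2 ≠ 0}) ∧
    (-2) * (cCount (μ.cells \ (ν (m - 1)).cells) 0 : ℤ) +
      ∑ᶠ r : ℤ,
        (dCount μ.cells r ^ 2 -
          ∑ j ∈ Finset.range m,
            (dCount (μ.cells \ (ν (j + 1)).cells) r -
              dCount (μ.cells \ (ν j).cells) r) ^ 2) < 0 := by
  obtain ⟨n, hn⟩ := exists_subset_range_sprod μ.cells
  have hsupp : (Function.support fun r : ℤ => dCount μ.cells r ^ 2 - ∑ j ∈ range m,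
      (dCount (μ.cells \ (ν (j + 1)).cells) r - dCount (μ.cells \ (ν j).cells) r) ^ 2) ⊆
      Ico (-n : ℤ) n := fun r hr => by
    by_contra hr'
    simp [dCount_eq_zero_of_subset hn hr', dCount_eq_zero_of_subset (sdiff_subset.trans hn) hr']
      at hr
  refine ⟨(Ico (-n : ℤ) n).finite_toSet.subset hsupp, ?_⟩
  have hle : ∀ k ≤ m, ν k ≤ μ := fun k hk => by
    induction k with
    | zero => exact hν0.le
    | succ k ih => exact (hchain k hk).trans (ih (by omega))
  have hρne : (μ.cells \ (ν (m - 1)).cells).Nonempty := sdiff_nonempty.mpr fun h =>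
    hne (le_antisymm (hle _ (by omega)) (YoungDiagram.cells_subset_iff.mp h))
  have key := two_mul_cCount_sub_lt_sum_sum_sq_dCount (ρ := fun j => μ.cells \ (ν j).cells)
    (fun _ => sdiff_subset.trans hn) (by simp [hν0])
    (fun j hj => sdiff_subset_sdiff subset_rfl (hchain j hj)) hρne
  simp only [hνm, YoungDiagram.cells_bot, sdiff_empty] at key
  rw [finsum_eq_sum_of_support_subset _ hsupp, sum_sub_distrib, sum_comm,
    YoungDiagram.sum_sq_dCount_cells hn]
  linarith

/-- Strict negativity of the constant term of the equivariant vertex contribution: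
for a nonempty Young diagram `μ`, `m ≥ 1`, and a decreasing chain of Young diagrams
`ν 0 = μ ⊇ ν 1 ⊇ ⋯ ⊇ ν m = ∅` with `ν (m-1) ≠ μ`, setting `ρ_j = μ \ ν_j`
(so `ρ_0 = ∅`, `ρ_m = μ`, `ρ_{m-1} ≠ ∅`), one has
`-2 c₀(ρ_{m-1}) + ∑_{r ∈ ℤ} (d_r(μ)² - ∑_{j=1}^m (d_r(ρ_j) - d_r(ρ_{j-1}))²) < 0`,
the outer sum having only finitely many nonzero terms. -/
theorem stmt5 (μ : YoungDiagram) (hμ : μ ≠ ⊥) (m : ℕ) (hm : 1 ≤ m)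
    (ν : ℕ → YoungDiagram) (hν0 : ν 0 = μ) (hνm : ν m = ⊥)
    (hchain : ∀ j < m, ν (j + 1) ≤ ν j) (hne : ν (m - 1) ≠ μ) :
    (Set.Finite {r : ℤ |
      dCount μ.cells r ^ 2 -
        ∑ j ∈ Finset.range m,
          (dCount (μ.cells \ (ν (j + 1)).cells) r -
            dCount (μ.cells \ (ν j).cells) r) ^ 2 ≠ 0}) ∧
    (-2) * (cCount (μ.cells \ (ν (m - 1)).cells) 0 : ℤ) +
      ∑ᶠ r : ℤ,
        (dCount μ.cells r ^ 2 -
          ∑ j ∈ Finset.range m,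
            (dCount (μ.cells \ (ν (j + 1)).cells) r -
              dCount (μ.cells \ (ν j).cells) r) ^ 2) < 0 :=
  stmt5_general μ m ν hν0 hνm hchain hne
end

section
/- In the ring ℚ⟦q⟧ of formal power series over ℚ, one has D C₄ = −8·C₂·C₄ + 21·C₆, where D is the operator q·d/dq. (This is one of the paper's listed quasimodular differentiation formulas, equivalent to Ramanujan's identity q·dE₄/dq = (E₂E₄ − E₆)/3.) -/
/-- The divisor power sum `σ_j(n) = ∑_{d ∣ n} d^j`. -/
def sigmaFn (j n : ℕ) : ℕ := ∑ d ∈ n.divisors, d ^ j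

/-- The Eisenstein series `E₂ = 1 - 24 ∑_{n≥1} σ₁(n) qⁿ` in `ℚ⟦q⟧`. -/
noncomputable def E₂ : PowerSeries ℚ :=
  PowerSeries.mk fun n => if n = 0 then 1 else -24 * (sigmaFn 1 n : ℚ)

/-- The Eisenstein series `E₄ = 1 + 240 ∑_{n≥1} σ₃(n) qⁿ` in `ℚ⟦q⟧`. -/
noncomputable def E₄ : PowerSeries ℚ :=
  PowerSeries.mk fun n => if n = 0 then 1 else 240 * (sigmaFn 3 n : ℚ)

/-- The Eisenstein series `E₆ = 1 - 504 ∑_{n≥1} σ₅(n) qⁿ` in `ℚ⟦q⟧`. -/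
noncomputable def E₆ : PowerSeries ℚ :=
  PowerSeries.mk fun n => if n = 0 then 1 else -504 * (sigmaFn 5 n : ℚ)

/-- `C₂ = -E₂/24`. -/
noncomputable def C₂ : PowerSeries ℚ := (-1 / 24 : ℚ) • E₂

/-- `C₄ = E₄/2880`. -/
noncomputable def C₄ : PowerSeries ℚ := (1 / 2880 : ℚ) • E₄

/-- `C₆ = -E₆/181440`. -/
noncomputable def C₆ : PowerSeries ℚ := (-1 / 181440 : ℚ) • E₆

/-- The operator `D = q·d/dq` on `ℚ⟦q⟧`, sending `∑ aₙ qⁿ` to `∑ n aₙ qⁿ`. -/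
noncomputable def Dop (f : PowerSeries ℚ) : PowerSeries ℚ :=
  PowerSeries.mk fun n => (n : ℚ) * PowerSeries.coeff n f

/-!
Writing `Eₖ` through `∑ σₖ₋₁(n) qⁿ`, the identity amounts to the convolution formula
`240 ∑_{ab+cd=n} b d³ = 21 σ₅(n) + 10 σ₃(n) - σ₁(n) - 30 n σ₃(n)`, the sum running over positive
`a, b, c, d`. This is proved by Liouville's elementary method. The bijection
`(a, b, c, d) ↦ (a, b - d, c + a, d)` from the solutions with `d < b` onto those with `a < c`, and
the symmetry `(a, b, c, d) ↦ (c, d, a, b)`, turn a sum of differences of any weight `φ(b, d)` over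
`d < b` into the difference of its sums over the diagonals `a = c` and `b = d`; both diagonals are
parametrised by divisors of `n`. For the weight `2d⁴ + 4bd³ + 3b²d²` the differences are
`8(bd³ + db³)`, and Faulhaber's formulas evaluate the diagonal `a = c`.
-/

open Finset

theorem Finset.sum_filter_comp_of_involutive {α M : Type*} [AddCommMonoid M] {s : Finset α}
    {σ : α → α} (hσ : Function.Involutive σ) (hs : ∀ x ∈ s, σ x ∈ s) (p : α → Prop)
    [DecidablePred p] (f : α → M) :
    ∑ x ∈ s.filter (fun x => p (σ x)), f (σ x) = ∑ x ∈ s.filter p, f x := by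
  simp only [sum_filter]
  exact sum_nbij' σ σ hs hs (fun x _ => hσ x) (fun x _ => hσ x) fun _ _ => rfl

theorem Finset.sum_filter_lt_add_sum_filter_gt_add_sum_filter_eq {ι α M : Type*} [LinearOrder α]
    [AddCommMonoid M] (s : Finset ι) (x y : ι → α) (f : ι → M) :
    ∑ i ∈ s.filter (fun i => x i < y i), f i + ∑ i ∈ s.filter (fun i => y i < x i), f i
      + ∑ i ∈ s.filter (fun i => x i = y i), f i = ∑ i ∈ s, f i := by
  simp only [sum_filter, ← sum_add_distrib]
  refine sum_congr rfl fun i _ => ?_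
  rcases lt_trichotomy (x i) (y i) with h | h | h
  · simp [h, h.not_gt, h.ne]
  · simp [h]
  · simp [h, h.not_gt, h.ne']

theorem sum_divisorsAntidiagonal_fst_pow (k n : ℕ) :
    ∑ p ∈ n.divisorsAntidiagonal, (p.1 : ℚ) ^ k = sigmaFn k n := by
  rw [Nat.sum_divisorsAntidiagonal (fun i _ => (i : ℚ) ^ k), sigmaFn]
  push_cast
  rfl

theorem sum_divisorsAntidiagonal_snd_pow (k n : ℕ) :
    ∑ p ∈ n.divisorsAntidiagonal, (p.2 : ℚ) ^ k = sigmaFn k n := by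
  rw [Nat.sum_divisorsAntidiagonal' (fun _ j => (j : ℚ) ^ k), sigmaFn]
  push_cast
  rfl

theorem sum_range_cast (s : ℕ) : ∑ b ∈ range s, (b : ℚ) = (s ^ 2 - s) / 2 := by
  induction s with
  | zero => simp
  | succ m ih => rw [sum_range_succ, ih]; push_cast; ring

theorem sum_range_cast_sq (s : ℕ) :
    ∑ b ∈ range s, (b : ℚ) ^ 2 = (2 * s ^ 3 - 3 * s ^ 2 + s) / 6 := by
  induction s with
  | zero => simp
  | succ m ih => rw [sum_range_succ, ih]; push_cast; ring

theorem sum_range_cast_cube (s : ℕ) :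
    ∑ b ∈ range s, (b : ℚ) ^ 3 = (s ^ 4 - 2 * s ^ 3 + s ^ 2) / 4 := by
  induction s with
  | zero => simp
  | succ m ih => rw [sum_range_succ, ih]; push_cast; ring

theorem sum_range_cast_pow_four (s : ℕ) :
    ∑ b ∈ range s, (b : ℚ) ^ 4 = (6 * s ^ 5 - 15 * s ^ 4 + 10 * s ^ 3 - s) / 30 := by
  induction s with
  | zero => simp
  | succ m ih => rw [sum_range_succ, ih]; push_cast; ring

def liouvilleWeight (b d : ℕ) : ℚ := 2 * d ^ 4 + 4 * b * d ^ 3 + 3 * b ^ 2 * d ^ 2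

theorem liouvilleWeight_sub_add_sub {b d : ℕ} (h : d < b) :
    liouvilleWeight b d - liouvilleWeight (b - d) d + liouvilleWeight d b
        - liouvilleWeight d (b - d) = 8 * (b * d ^ 3 + d * b ^ 3) := by
  obtain ⟨x, rfl⟩ := Nat.exists_eq_add_of_lt h
  rw [show d + x + 1 - d = x + 1 by omega]
  simp only [liouvilleWeight]
  push_cast
  ring

theorem sum_Ico_liouvilleWeight (s : ℕ) :
    ∑ b ∈ Ico 1 s, liouvilleWeight b (s - b)
      = (21 * s ^ 5 - 30 * s ^ 4 + 10 * s ^ 3 - s) / 30 := by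
  rcases Nat.eq_zero_or_pos s with rfl | hs
  · simp
  have hrange : ∑ b ∈ range s, liouvilleWeight b (s - b)
      = ∑ b ∈ range s,
          (2 * (s : ℚ) ^ 4 - 4 * s ^ 3 * b + 3 * s ^ 2 * b ^ 2 - 2 * s * b ^ 3 + b ^ 4) :=
    sum_congr rfl fun b hb => by
      rw [liouvilleWeight, Nat.cast_sub (mem_range.1 hb).le]
      ring
  rw [range_eq_Ico, sum_eq_sum_Ico_succ_bot hs, ← range_eq_Ico, zero_add] at hrange
  simp only [sum_add_distrib, sum_sub_distrib, ← mul_sum, sum_const, card_range, nsmul_eq_mul,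
    sum_range_cast, sum_range_cast_sq, sum_range_cast_cube, sum_range_cast_pow_four] at hrange
  have h0 : liouvilleWeight 0 (s - 0) = 2 * s ^ 4 := by simp [liouvilleWeight]
  linarith

def twoProdReps (n : ℕ) : Finset (ℕ × ℕ × ℕ × ℕ) :=
  (Icc 1 n ×ˢ Icc 1 n ×ˢ Icc 1 n ×ˢ Icc 1 n).filter fun t => t.1 * t.2.1 + t.2.2.1 * t.2.2.2 = n

theorem mem_twoProdReps {n a b c d : ℕ} :
    (a, b, c, d) ∈ twoProdReps n ↔ 0 < a ∧ 0 < b ∧ 0 < c ∧ 0 < d ∧ a * b + c * d = n := by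
  simp only [twoProdReps, mem_filter, mem_product, mem_Icc]
  constructor
  · rintro ⟨⟨⟨ha, -⟩, ⟨hb, -⟩, ⟨hc, -⟩, ⟨hd, -⟩⟩, h⟩
    exact ⟨ha, hb, hc, hd, h⟩
  · rintro ⟨ha, hb, hc, hd, h⟩
    refine ⟨⟨⟨ha, ?_⟩, ⟨hb, ?_⟩, ⟨hc, ?_⟩, ⟨hd, ?_⟩⟩, h⟩ <;> nlinarith

section TwoProdReps

variable {n : ℕ}

theorem sum_filter_twoProdReps_swap (p : ℕ × ℕ × ℕ × ℕ → Prop) [DecidablePred p]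
    (f : ℕ × ℕ × ℕ × ℕ → ℚ) :
    ∑ t ∈ (twoProdReps n).filter (fun t => p (t.2.2.1, t.2.2.2, t.1, t.2.1)),
        f (t.2.2.1, t.2.2.2, t.1, t.2.1)
      = ∑ t ∈ (twoProdReps n).filter p, f t := by
  refine sum_filter_comp_of_involutive (fun _ => rfl) ?_ p f
  rintro ⟨a, b, c, d⟩ h
  obtain ⟨ha, hb, hc, hd, h⟩ := mem_twoProdReps.1 h
  exact mem_twoProdReps.2 ⟨hc, hd, ha, hb, by dsimp only; linarith⟩

theorem sum_filter_twoProdReps_sub_snd (φ : ℕ → ℕ → ℚ) :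
    ∑ t ∈ (twoProdReps n).filter (fun t => t.2.2.2 < t.2.1), φ (t.2.1 - t.2.2.2) t.2.2.2
      = ∑ t ∈ (twoProdReps n).filter (fun t => t.1 < t.2.2.1), φ t.2.1 t.2.2.2 := by
  refine sum_nbij' (fun t => (t.1, t.2.1 - t.2.2.2, t.2.2.1 + t.1, t.2.2.2))
    (fun t => (t.1, t.2.1 + t.2.2.2, t.2.2.1 - t.1, t.2.2.2)) ?_ ?_ ?_ ?_ fun _ _ => rfl
  · rintro ⟨a, b, c, d⟩ h
    simp only [mem_filter, mem_twoProdReps] at h ⊢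
    obtain ⟨⟨ha, hb, hc, hd, rfl⟩, hdb⟩ := h
    obtain ⟨x, rfl⟩ := Nat.exists_eq_add_of_lt hdb
    refine ⟨⟨ha, by omega, by omega, hd, ?_⟩, by omega⟩
    rw [show d + x + 1 - d = x + 1 by omega]
    ring
  · rintro ⟨a, b, c, d⟩ h
    simp only [mem_filter, mem_twoProdReps] at h ⊢
    obtain ⟨⟨ha, hb, hc, hd, rfl⟩, hac⟩ := h
    obtain ⟨x, rfl⟩ := Nat.exists_eq_add_of_lt hac
    refine ⟨⟨ha, by omega, by omega, hd, ?_⟩, by omega⟩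
    rw [show a + x + 1 - a = x + 1 by omega]
    ring
  · rintro ⟨a, b, c, d⟩ h
    simp only [mem_filter, mem_twoProdReps] at h
    simp only [Prod.mk.injEq, true_and, and_true]
    omega
  · rintro ⟨a, b, c, d⟩ h
    simp only [mem_filter, mem_twoProdReps] at h
    simp only [Prod.mk.injEq, true_and, and_true]
    omega

theorem sum_filter_twoProdReps_fst_eq_sub_sum_filter_snd_eq (φ : ℕ → ℕ → ℚ) :
    ∑ t ∈ (twoProdReps n).filter (fun t => t.1 = t.2.2.1), φ t.2.1 t.2.2.2
        - ∑ t ∈ (twoProdReps n).filter (fun t => t.2.1 = t.2.2.2), φ t.2.1 t.2.2.2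
      = ∑ t ∈ (twoProdReps n).filter (fun t => t.2.2.2 < t.2.1),
          (φ t.2.1 t.2.2.2 - φ (t.2.1 - t.2.2.2) t.2.2.2
            + φ t.2.2.2 t.2.1 - φ t.2.2.2 (t.2.1 - t.2.2.2)) := by
  have hbd := sum_filter_lt_add_sum_filter_gt_add_sum_filter_eq (twoProdReps n)
    (fun t => t.2.1) (fun t => t.2.2.2) (fun t => φ t.2.1 t.2.2.2)
  have hac := sum_filter_lt_add_sum_filter_gt_add_sum_filter_eq (twoProdReps n)
    (fun t => t.1) (fun t => t.2.2.1) (fun t => φ t.2.1 t.2.2.2)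
  have hsub := sum_filter_twoProdReps_sub_snd (n := n) φ
  have hsub' := sum_filter_twoProdReps_sub_snd (n := n) (fun b d => φ d b)
  have hswap := sum_filter_twoProdReps_swap (n := n) (fun t => t.2.1 < t.2.2.2)
    (fun t => φ t.2.1 t.2.2.2)
  have hswap' := sum_filter_twoProdReps_swap (n := n) (fun t => t.2.2.1 < t.1)
    (fun t => φ t.2.1 t.2.2.2)
  simp only [sum_add_distrib, sum_sub_distrib]
  dsimp only at hsub' hswap hswap'
  linarith

theorem sum_filter_twoProdReps_fst_eq (f : ℕ × ℕ × ℕ × ℕ → ℚ) :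
    ∑ t ∈ (twoProdReps n).filter (fun t => t.1 = t.2.2.1), f t
      = ∑ p ∈ n.divisorsAntidiagonal, ∑ b ∈ Ico 1 p.2, f (p.1, b, p.1, p.2 - b) := by
  rw [sum_sigma']
  refine sum_nbij' (fun t => ⟨(t.1, t.2.1 + t.2.2.2), t.2.1⟩)
    (fun x => (x.1.1, x.2, x.1.1, x.1.2 - x.2)) ?_ ?_ ?_ ?_ ?_
  · rintro ⟨a, b, c, d⟩ h
    simp only [mem_filter, mem_twoProdReps] at h
    obtain ⟨⟨ha, hb, hc, hd, rfl⟩, rfl⟩ := h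
    simp only [mem_sigma, Nat.mem_divisorsAntidiagonal, mem_Ico]
    refine ⟨⟨by ring, by positivity⟩, hb, by omega⟩
  · rintro ⟨⟨a, s⟩, b⟩ h
    simp only [mem_sigma, Nat.mem_divisorsAntidiagonal, mem_Ico] at h
    obtain ⟨⟨rfl, hn⟩, hb, hbs⟩ := h
    simp only [mem_filter, mem_twoProdReps, and_true]
    refine ⟨Nat.pos_of_ne_zero (left_ne_zero_of_mul hn), hb,
      Nat.pos_of_ne_zero (left_ne_zero_of_mul hn), by omega, ?_⟩
    rw [← mul_add, Nat.add_sub_cancel' hbs.le]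
  · rintro ⟨a, b, c, d⟩ h
    simp only [mem_filter, mem_twoProdReps] at h
    obtain ⟨-, rfl⟩ := h
    simp
  · rintro ⟨⟨a, s⟩, b⟩ h
    simp only [mem_sigma, Nat.mem_divisorsAntidiagonal, mem_Ico] at h
    simp only [Sigma.mk.injEq, Prod.mk.injEq, true_and, heq_eq_eq, and_true]
    omega
  · rintro ⟨a, b, c, d⟩ h
    simp only [mem_filter, mem_twoProdReps] at h
    obtain ⟨-, rfl⟩ := h
    simp

theorem sum_filter_twoProdReps_snd_eq_pow_succ (k : ℕ) :
    ∑ t ∈ (twoProdReps n).filter (fun t => t.2.1 = t.2.2.2), (t.2.1 : ℚ) ^ (k + 1)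
      = n * sigmaFn k n - sigmaFn (k + 1) n := by
  have htranspose := sum_filter_comp_of_involutive (s := twoProdReps n)
    (σ := fun t => (t.2.1, t.1, t.2.2.2, t.2.2.1)) (fun _ => rfl) ?_
    (fun t => t.1 = t.2.2.1) (fun t => (t.1 : ℚ) ^ (k + 1))
  · dsimp only at htranspose
    rw [htranspose, sum_filter_twoProdReps_fst_eq, ← sum_divisorsAntidiagonal_fst_pow,
      ← sum_divisorsAntidiagonal_fst_pow, mul_sum, ← sum_sub_distrib]
    refine sum_congr rfl fun p hp => ?_
    obtain ⟨rfl, hn⟩ := Nat.mem_divisorsAntidiagonal.1 hp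
    have hp2 : 1 ≤ p.2 := Nat.pos_of_ne_zero (right_ne_zero_of_mul hn)
    dsimp only
    rw [sum_const, Nat.card_Ico, nsmul_eq_mul, Nat.cast_sub hp2, Nat.cast_mul]
    ring
  · rintro ⟨a, b, c, d⟩ h
    obtain ⟨ha, hb, hc, hd, h⟩ := mem_twoProdReps.1 h
    exact mem_twoProdReps.2 ⟨hb, ha, hd, hc, by dsimp only; linarith⟩

theorem sum_filter_twoProdReps_fst_eq_liouvilleWeight :
    ∑ t ∈ (twoProdReps n).filter (fun t => t.1 = t.2.2.1), liouvilleWeight t.2.1 t.2.2.2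
      = (21 * sigmaFn 5 n - 30 * sigmaFn 4 n + 10 * sigmaFn 3 n - sigmaFn 1 n) / 30 := by
  simp only [sum_filter_twoProdReps_fst_eq, sum_Ico_liouvilleWeight,
    ← sum_divisorsAntidiagonal_snd_pow, ← sum_div, mul_sum, ← sum_sub_distrib, ← sum_add_distrib,
    pow_one]

theorem sum_filter_twoProdReps_snd_eq_liouvilleWeight :
    ∑ t ∈ (twoProdReps n).filter (fun t => t.2.1 = t.2.2.2), liouvilleWeight t.2.1 t.2.2.2
      = 9 * (n * sigmaFn 3 n - sigmaFn 4 n) := by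
  rw [← sum_filter_twoProdReps_snd_eq_pow_succ, mul_sum]
  refine sum_congr rfl fun t ht => ?_
  rw [(mem_filter.1 ht).2, liouvilleWeight]
  ring

theorem sum_twoProdReps_snd_mul_pow_three_eq_sum_filter_lt :
    ∑ t ∈ twoProdReps n, (t.2.1 : ℚ) * t.2.2.2 ^ 3
      = ∑ t ∈ (twoProdReps n).filter (fun t => t.2.2.2 < t.2.1),
          ((t.2.1 : ℚ) * t.2.2.2 ^ 3 + t.2.2.2 * t.2.1 ^ 3) + (n * sigmaFn 3 n - sigmaFn 4 n) := by
  have htri := sum_filter_lt_add_sum_filter_gt_add_sum_filter_eq (twoProdReps n)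
    (fun t => t.2.2.2) (fun t => t.2.1) (fun t => (t.2.1 : ℚ) * t.2.2.2 ^ 3)
  have hswap := sum_filter_twoProdReps_swap (n := n) (fun t => t.2.1 < t.2.2.2)
    (fun t => (t.2.1 : ℚ) * t.2.2.2 ^ 3)
  have hdiag :
      ∑ t ∈ (twoProdReps n).filter (fun t => t.2.2.2 = t.2.1), (t.2.1 : ℚ) * t.2.2.2 ^ 3
        = n * sigmaFn 3 n - sigmaFn 4 n := by
    rw [← sum_filter_twoProdReps_snd_eq_pow_succ]
    refine sum_congr (filter_congr fun t _ => eq_comm) fun t ht => ?_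
    rw [(mem_filter.1 ht).2]
    ring
  dsimp only at hswap
  rw [sum_add_distrib]
  linarith

theorem sum_twoProdReps_snd_mul_pow_three :
    240 * ∑ t ∈ twoProdReps n, (t.2.1 : ℚ) * t.2.2.2 ^ 3
      = 21 * sigmaFn 5 n + 10 * sigmaFn 3 n - sigmaFn 1 n - 30 * n * sigmaFn 3 n := by
  have hL := sum_filter_twoProdReps_fst_eq_sub_sum_filter_snd_eq (n := n) liouvilleWeight
  rw [sum_filter_twoProdReps_fst_eq_liouvilleWeight,
    sum_filter_twoProdReps_snd_eq_liouvilleWeight,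
    sum_congr rfl fun t ht => liouvilleWeight_sub_add_sub (mem_filter.1 ht).2, ← mul_sum] at hL
  rw [sum_twoProdReps_snd_mul_pow_three_eq_sum_filter_lt]
  linarith

end TwoProdReps

def sigmaSeries (k : ℕ) : PowerSeries ℚ := PowerSeries.mk fun n => (sigmaFn k n : ℚ)

theorem coeff_sigmaSeries_mul_sigmaSeries (j k n : ℕ) :
    PowerSeries.coeff n (sigmaSeries j * sigmaSeries k)
      = ∑ t ∈ twoProdReps n, (t.2.1 : ℚ) ^ j * t.2.2.2 ^ k := by
  simp only [PowerSeries.coeff_mul, sigmaSeries, PowerSeries.coeff_mk,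
    ← sum_divisorsAntidiagonal_snd_pow, sum_mul_sum, ← sum_product']
  rw [sum_sigma']
  refine sum_nbij' (fun x => (x.2.1.1, x.2.1.2, x.2.2.1, x.2.2.2))
    (fun t => ⟨(t.1 * t.2.1, t.2.2.1 * t.2.2.2), ((t.1, t.2.1), (t.2.2.1, t.2.2.2))⟩)
    ?_ ?_ ?_ ?_ fun _ _ => rfl
  · rintro ⟨⟨i, j⟩, ⟨a, b⟩, ⟨c, d⟩⟩ h
    simp only [mem_sigma, HasAntidiagonal.mem_antidiagonal, mem_product,
      Nat.mem_divisorsAntidiagonal] at h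
    obtain ⟨rfl, ⟨rfl, hab⟩, ⟨rfl, hcd⟩⟩ := h
    exact mem_twoProdReps.2 ⟨Nat.pos_of_ne_zero (left_ne_zero_of_mul hab),
      Nat.pos_of_ne_zero (right_ne_zero_of_mul hab), Nat.pos_of_ne_zero (left_ne_zero_of_mul hcd),
      Nat.pos_of_ne_zero (right_ne_zero_of_mul hcd), rfl⟩
  · rintro ⟨a, b, c, d⟩ h
    obtain ⟨ha, hb, hc, hd, rfl⟩ := mem_twoProdReps.1 h
    simp only [mem_sigma, HasAntidiagonal.mem_antidiagonal, mem_product,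
      Nat.mem_divisorsAntidiagonal]
    exact ⟨trivial, ⟨trivial, by positivity⟩, ⟨trivial, by positivity⟩⟩
  · rintro ⟨⟨i, j⟩, ⟨a, b⟩, ⟨c, d⟩⟩ h
    simp only [mem_sigma, HasAntidiagonal.mem_antidiagonal, mem_product,
      Nat.mem_divisorsAntidiagonal] at h
    obtain ⟨-, ⟨rfl, -⟩, ⟨rfl, -⟩⟩ := h
    rfl
  · rintro ⟨a, b, c, d⟩ -
    rfl

theorem sigmaSeries_one_mul_sigmaSeries_three :
    (240 : ℚ) • (sigmaSeries 1 * sigmaSeries 3)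
      = (21 : ℚ) • sigmaSeries 5 + (10 : ℚ) • sigmaSeries 3 - sigmaSeries 1
        - (30 : ℚ) • Dop (sigmaSeries 3) := by
  ext n
  simp only [map_sub, map_add, PowerSeries.coeff_smul, smul_eq_mul,
    coeff_sigmaSeries_mul_sigmaSeries, pow_one, sum_twoProdReps_snd_mul_pow_three]
  simp only [Dop, sigmaSeries, PowerSeries.coeff_mk]
  ring

theorem sigmaFn_apply_zero (k : ℕ) : sigmaFn k 0 = 0 := by simp [sigmaFn]

theorem E₂_eq_sigmaSeries : E₂ = 1 - (24 : ℚ) • sigmaSeries 1 := by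
  ext n
  rcases n with _ | n <;> simp [E₂, sigmaSeries, PowerSeries.coeff_one, sigmaFn_apply_zero]

theorem E₄_eq_sigmaSeries : E₄ = 1 + (240 : ℚ) • sigmaSeries 3 := by
  ext n
  rcases n with _ | n <;> simp [E₄, sigmaSeries, PowerSeries.coeff_one, sigmaFn_apply_zero]

theorem E₆_eq_sigmaSeries : E₆ = 1 - (504 : ℚ) • sigmaSeries 5 := by
  ext n
  rcases n with _ | n <;> simp [E₆, sigmaSeries, PowerSeries.coeff_one, sigmaFn_apply_zero]

theorem Dop_add (f g : PowerSeries ℚ) : Dop (f + g) = Dop f + Dop g := by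
  ext n
  simp [Dop, mul_add]

theorem Dop_smul (c : ℚ) (f : PowerSeries ℚ) : Dop (c • f) = c • Dop f := by
  ext n
  simp [Dop, mul_left_comm]

theorem Dop_one : Dop 1 = 0 := by
  ext n
  simp [Dop, PowerSeries.coeff_one]

/-- The quasimodular differentiation formula `D C₄ = -8 C₂ C₄ + 21 C₆`. -/
theorem stmt7 : Dop C₄ = -8 * C₂ * C₄ + 21 * C₆ := by
  -- with integer factors turned into `ℚ`-scalars, `module` sees a linear identity whose atoms are
  -- `1`, the `sigmaSeries`, the product `sigmaSeries 1 * sigmaSeries 3` and `Dop (sigmaSeries 3)`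
  rw [show (-8 : PowerSeries ℚ) = algebraMap ℚ _ (-8) by rw [map_neg, map_ofNat],
    show (21 : PowerSeries ℚ) = algebraMap ℚ _ 21 by rw [map_ofNat],
    ← Algebra.smul_def, ← Algebra.smul_def]
  rw [C₂, C₄, C₆, E₂_eq_sigmaSeries, E₄_eq_sigmaSeries, E₆_eq_sigmaSeries, Dop_smul, Dop_add,
    Dop_one, Dop_smul]
  simp only [smul_mul_assoc, mul_smul_comm, sub_mul, mul_add, one_mul, mul_one]
  linear_combination (norm := module) (1 / 360 : ℚ) • sigmaSeries_one_mul_sigmaSeries_three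
end

section
/- For every real number q with 0 < q < 1, the function q ↦ 1/Δ(q) is differentiable on (0,1) and satisfies q · (d/dq)(1/Δ(q)) = 24·C₂(q)/Δ(q), equivalently q·Δ′(q) = E₂(q)·Δ(q). (This is the paper's listed formula q·(d/dq)(1/Δ) = 24C₂/Δ for the discriminant modular form.) -/
/-- The Eisenstein series `E₂(q) = 1 - 24 ∑_{n≥1} σ₁(n) qⁿ` as a real function. -/
noncomputable def E2r (q : ℝ) : ℝ := 1 - 24 * ∑' n : ℕ, (sigmaFn 1 (n + 1) : ℝ) * q ^ (n + 1)

/-- The Eisenstein series `E₄(q) = 1 + 240 ∑_{n≥1} σ₃(n) qⁿ` as a real function. -/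
noncomputable def E4r (q : ℝ) : ℝ := 1 + 240 * ∑' n : ℕ, (sigmaFn 3 (n + 1) : ℝ) * q ^ (n + 1)

/-- The Eisenstein series `E₆(q) = 1 - 504 ∑_{n≥1} σ₅(n) qⁿ` as a real function. -/
noncomputable def E6r (q : ℝ) : ℝ := 1 - 504 * ∑' n : ℕ, (sigmaFn 5 (n + 1) : ℝ) * q ^ (n + 1)

/-- `C₂ = -E₂/24`. -/
noncomputable def C2r (q : ℝ) : ℝ := -E2r q / 24

/-- `C₄ = E₄/2880`. -/
noncomputable def C4r (q : ℝ) : ℝ := E4r q / 2880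

/-- `C₆ = -E₆/181440`. -/
noncomputable def C6r (q : ℝ) : ℝ := -E6r q / 181440

/-- The discriminant `Δ(q) = q ∏_{n≥1} (1-qⁿ)^{24}`. -/
noncomputable def DeltaR (q : ℝ) : ℝ := q * ∏' n : ℕ, (1 - q ^ (n + 1)) ^ 24

/-- The operator `q·d/dq` on real functions. -/
noncomputable def Dfun (f : ℝ → ℝ) : ℝ → ℝ := fun q => q * deriv f q

/-! Since `Δ(q) = q · exp (24 ∑ log (1 - qⁿ))`, termwise differentiation of the logarithmic
series (dominated on a disc of radius `< 1` by `n rⁿ⁻¹ / (1 - r)`) gives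
`q Δ′/Δ = 1 - 24 ∑ n qⁿ / (1 - qⁿ)`. Expanding each `qⁿ / (1 - qⁿ)` as a geometric series and
regrouping by `m = n k` turns this Lambert series into `∑ σ₁(m) qᵐ`, so `q Δ′ = E₂ Δ`; the
formula for `1/Δ` is then the quotient rule. -/

open Real

noncomputable def logEulerProduct (x : ℝ) : ℝ := ∑' n : ℕ, log (1 - x ^ (n + 1))

lemma one_sub_pow_succ_pos {x : ℝ} (hx : |x| < 1) (n : ℕ) : 0 < 1 - x ^ (n + 1) := by
  have : |x ^ (n + 1)| < 1 := by
    rw [abs_pow]; exact pow_lt_one₀ (abs_nonneg x) hx n.succ_ne_zero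
  linarith [le_abs_self (x ^ (n + 1))]

lemma summable_log_one_sub_pow_succ {x : ℝ} (hx : |x| < 1) :
    Summable fun n : ℕ => log (1 - x ^ (n + 1)) := by
  have hgeom : Summable fun n : ℕ => -x ^ (n + 1) :=
    ((summable_nat_add_iff 1).2 (summable_geometric_of_abs_lt_one hx)).neg
  simpa [sub_eq_add_neg] using Real.summable_log_one_add_of_summable hgeom

lemma tprod_one_sub_pow_succ_pow_eq_exp (k : ℕ) {x : ℝ} (hx : |x| < 1) :
    ∏' n : ℕ, (1 - x ^ (n + 1)) ^ k = exp (k * logEulerProduct x) := by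
  have hpos (n : ℕ) : 0 < (1 - x ^ (n + 1)) ^ k := pow_pos (one_sub_pow_succ_pos hx n) k
  rw [logEulerProduct, ← tsum_mul_left]
  simp_rw [← log_pow]
  exact (rexp_tsum_eq_tprod hpos (by simpa [log_pow] using
    (summable_log_one_sub_pow_succ hx).mul_left (k : ℝ))).symm

lemma DeltaR_eq_mul_exp {x : ℝ} (hx : |x| < 1) :
    DeltaR x = x * exp (24 * logEulerProduct x) := by
  rw [DeltaR, tprod_one_sub_pow_succ_pow_eq_exp 24 hx, Nat.cast_ofNat]

lemma summable_succ_mul_geometric {r : ℝ} (hr0 : 0 ≤ r) (hr1 : r < 1) :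
    Summable fun n : ℕ => ((n : ℝ) + 1) * r ^ n := by
  have hr : ‖r‖ < 1 := by rwa [norm_of_nonneg hr0]
  simpa [add_mul] using
    (summable_pow_mul_geometric_of_norm_lt_one 1 hr).add (summable_geometric_of_lt_one hr0 hr1)

lemma hasDerivAt_logEulerProduct {x : ℝ} (hx : |x| < 1) :
    HasDerivAt logEulerProduct (-∑' n : ℕ, ((n : ℝ) + 1) * x ^ n / (1 - x ^ (n + 1))) x := by
  set r := (1 + |x|) / 2 with hr
  have hr1 : r < 1 := by linarith
  have hxr : |x| < r := by linarith
  have hball {y : ℝ} (hy : y ∈ Metric.ball 0 r) : |y| < r := by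
    simpa [Real.dist_eq] using hy
  have hderiv (n : ℕ) (y : ℝ) (hy : |y| < 1) : HasDerivAt (fun z => log (1 - z ^ (n + 1)))
      (-(((n : ℝ) + 1) * y ^ n / (1 - y ^ (n + 1)))) y := by
    convert ((hasDerivAt_pow (n + 1) y).const_sub 1).log (one_sub_pow_succ_pos hy n).ne' using 1
    push_cast [Nat.add_sub_cancel]
    ring
  have hbound (n : ℕ) (y : ℝ) (hy : |y| < r) :
      ‖-(((n : ℝ) + 1) * y ^ n / (1 - y ^ (n + 1)))‖ ≤ ((n : ℝ) + 1) * r ^ n / (1 - r) := by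
    have hy1 : |y| < 1 := hy.trans hr1
    have hden : 1 - r ≤ 1 - y ^ (n + 1) := by
      have : |y| ^ (n + 1) ≤ |y| := pow_le_of_le_one (abs_nonneg y) hy1.le n.succ_ne_zero
      linarith [le_abs_self (y ^ (n + 1)), abs_pow y (n + 1)]
    rw [norm_neg, norm_div, norm_mul, norm_pow, Real.norm_eq_abs, Real.norm_eq_abs,
      Real.norm_eq_abs, abs_of_pos (one_sub_pow_succ_pos hy1 n), abs_of_nonneg (by positivity)]
    gcongr
  have hsum := hasDerivAt_tsum_of_isPreconnected
    ((summable_succ_mul_geometric (by positivity) hr1).div_const (1 - r))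
    Metric.isOpen_ball (convex_ball (0 : ℝ) r).isPreconnected
    (fun n y hy => hderiv n y ((hball hy).trans hr1)) (fun n y hy => hbound n y (hball hy))
    (by simpa [Real.dist_eq] using hxr) (summable_log_one_sub_pow_succ hx)
    (by simpa [Real.dist_eq] using hxr)
  rwa [tsum_neg] at hsum

lemma tsum_pow_mul_pow_div_one_sub_eq_tsum_sigmaFn {𝕜 : Type*} [NontriviallyNormedField 𝕜]
    [CompleteSpace 𝕜] [NormSMulClass ℤ 𝕜] (k : ℕ) {x : 𝕜} (hx : ‖x‖ < 1) :
    ∑' n : ℕ, ((n + 1 : ℕ) : 𝕜) ^ k * x ^ (n + 1) / (1 - x ^ (n + 1)) =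
      ∑' n : ℕ, (sigmaFn k (n + 1) : 𝕜) * x ^ (n + 1) := by
  have h := tsum_pow_div_one_sub_eq_tsum_sigma hx k
  rw [tsum_pnat_eq_tsum_succ (f := fun n => (n : 𝕜) ^ k * x ^ n / (1 - x ^ n)),
    tsum_pnat_eq_tsum_succ (f := fun n => (ArithmeticFunction.sigma k n : 𝕜) * x ^ n)] at h
  simpa only [sigmaFn, ArithmeticFunction.sigma_apply] using h

lemma E2r_eq_one_sub_mul_tsum {x : ℝ} (hx : |x| < 1) :
    E2r x = 1 - 24 * (x * ∑' n : ℕ, ((n : ℝ) + 1) * x ^ n / (1 - x ^ (n + 1))) := by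
  have hterm (n : ℕ) : ((n + 1 : ℕ) : ℝ) ^ 1 * x ^ (n + 1) / (1 - x ^ (n + 1)) =
      x * (((n : ℝ) + 1) * x ^ n / (1 - x ^ (n + 1))) := by
    push_cast
    ring
  rw [E2r, ← tsum_pow_mul_pow_div_one_sub_eq_tsum_sigmaFn 1 (by rwa [Real.norm_eq_abs]),
    tsum_congr hterm, tsum_mul_left]

lemma hasDerivAt_DeltaR {x : ℝ} (hx : |x| < 1) :
    HasDerivAt DeltaR (exp (24 * logEulerProduct x) * E2r x) x := by
  have hexp := ((hasDerivAt_logEulerProduct hx).const_mul 24).exp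
  have hprod := (hasDerivAt_id' x).fun_mul hexp
  have hball : IsOpen {y : ℝ | |y| < 1} := isOpen_lt continuous_abs continuous_const
  have heq : (fun y => y * exp (24 * logEulerProduct y)) =ᶠ[nhds x] DeltaR := by
    filter_upwards [hball.mem_nhds hx] with y hy
    exact (DeltaR_eq_mul_exp hy).symm
  refine (hprod.congr_of_eventuallyEq heq.symm).congr_deriv ?_
  rw [E2r_eq_one_sub_mul_tsum hx]
  ring

/-- For `0 < q < 1`, `q ↦ 1/Δ(q)` is differentiable and
`q (1/Δ)′(q) = 24 C₂(q)/Δ(q)`, equivalently `q Δ′(q) = E₂(q) Δ(q)`. -/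
theorem stmt10 (q : ℝ) (hq0 : 0 < q) (hq1 : q < 1) :
    DifferentiableAt ℝ (fun x => 1 / DeltaR x) q ∧
    q * deriv (fun x => 1 / DeltaR x) q = 24 * C2r q / DeltaR q ∧
    q * deriv DeltaR q = E2r q * DeltaR q := by
  have hq : |q| < 1 := by rwa [abs_of_pos hq0]
  have hΔ := hasDerivAt_DeltaR hq
  have hΔq : q * deriv DeltaR q = E2r q * DeltaR q := by
    rw [hΔ.deriv, DeltaR_eq_mul_exp hq]
    ring
  have hΔpos : 0 < DeltaR q := by
    rw [DeltaR_eq_mul_exp hq]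
    positivity
  have hinv : HasDerivAt (fun x => 1 / DeltaR x) (-deriv DeltaR q / DeltaR q ^ 2) q := by
    simpa only [one_div, hΔ.deriv] using hΔ.fun_inv hΔpos.ne'
  refine ⟨hinv.differentiableAt, ?_, hΔq⟩
  rw [hinv.deriv, C2r, mul_div_assoc', mul_neg, hΔq]
  field_simp
end
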